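/- arXiv:1812.05422 — 4 statements merged into one kernel-verified Lean document; each statement's English description precedes it below -/
import Mathlib

section
/- Let P be an n-detector with n > 0 and let F be any set of photon-number distributions. Then the PNR quality is non-increasing in n under reduction: Q_n(P, F) ≤ Q_{n-1}(P', F), where P' is the (n-1)-detector obtained from P by merging the outputs n-1 and n, i.e. P'(k, m) = P(k, m) for k < n-1, P'(n-1, m) = P(n-1, m) + P(n, m), and P'(k, m) = 0 for k ≥ n. -/
/-- A photon-number distribution: nonnegative with total probability 1. -/
def PhotonDist (p : ℕ → ℝ) : Prop :=
  (∀ m, 0 ≤ p m) ∧ (∑' m, p m) = 1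

/-- An `n`-detector: conditional output probabilities `P k m` (probability of
output `k` given `m` input photons), supported on outputs `0, …, n`. -/
def IsNDetector (n : ℕ) (P : ℕ → ℕ → ℝ) : Prop :=
  (∀ k m, 0 ≤ P k m ∧ P k m ≤ 1) ∧
  (∀ k m, n < k → P k m = 0) ∧
  (∀ m, (∑ k ∈ Finset.range (n + 1), P k m) = 1)

/-- The desired-output probability of the `n`-detector `P` on the input
distribution `p`. -/
noncomputable def desired (n : ℕ) (P : ℕ → ℕ → ℝ) (p : ℕ → ℝ) : ℝ :=
  (∑ m ∈ Finset.range (n + 1), P m m * p m) +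
    ∑' m, if n < m then P n m * p m else 0

/-- The PNR quality of the `n`-detector `P` on the set `F` of input
distributions. -/
noncomputable def quality (n : ℕ) (P : ℕ → ℕ → ℝ) (F : Set (ℕ → ℝ)) : ℝ :=
  sInf (desired n P '' F)

lemma desired_nonneg (n : ℕ) (P : ℕ → ℕ → ℝ) (p : ℕ → ℝ)
    (hP : ∀ k m, 0 ≤ P k m) (hp : ∀ m, 0 ≤ p m) : 0 ≤ desired n P p := by
  unfold desired
  have h1 : 0 ≤ ∑ m ∈ Finset.range (n + 1), P m m * p m :=
    Finset.sum_nonneg fun m _ => mul_nonneg (hP m m) (hp m)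
  have h2 : 0 ≤ ∑' m, if n < m then P n m * p m else 0 := by
    apply tsum_nonneg
    intro m
    split_ifs
    · exact mul_nonneg (hP n m) (hp m)
    · exact le_refl 0
  linarith

lemma desired_pointwise (k : ℕ) (P P' : ℕ → ℕ → ℝ)
    (hP : IsNDetector (k + 1) P)
    (hlt : ∀ j m, j < k → P' j m = P j m)
    (hmerge : ∀ m, P' k m = P k m + P (k + 1) m)
    (p : ℕ → ℝ) (hp : PhotonDist p) :
    desired (k + 1) P p ≤ desired k P' p := by
  obtain ⟨hp0, hp1⟩ := hp
  obtain ⟨hPb, hPz, hPs⟩ := hP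
  have hsum : Summable p := by
    by_contra h
    rw [tsum_eq_zero_of_not_summable h] at hp1
    norm_num at hp1
  have hb : ∀ j m, (if k + 1 < m then P j m * p m else 0) ≤ p m := by
    intro j m
    split_ifs
    · exact mul_le_of_le_one_left (hp0 m) (hPb j m).2
    · exact hp0 m
  have hnn : ∀ j m, 0 ≤ (if k + 1 < m then P j m * p m else 0) := by
    intro j m
    split_ifs
    · exact mul_nonneg (hPb j m).1 (hp0 m)
    · exact le_refl 0
  have hg1 : Summable (fun m => if k + 1 < m then P k m * p m else 0) :=
    Summable.of_nonneg_of_le (hnn k) (hb k) hsum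
  have hg2 : Summable (fun m => if k + 1 < m then P (k + 1) m * p m else 0) :=
    Summable.of_nonneg_of_le (hnn (k + 1)) (hb (k + 1)) hsum
  have he : Summable (fun m => if m = k + 1 then (P k m + P (k + 1) m) * p m else 0) := by
    apply summable_of_ne_finset_zero (s := {k + 1})
    intro m hm
    simp at hm
    simp [hm]
  have hfe : ∀ m, (if k < m then P' k m * p m else 0)
      = (if m = k + 1 then (P k m + P (k + 1) m) * p m else 0)
      + ((if k + 1 < m then P k m * p m else 0)
        + (if k + 1 < m then P (k + 1) m * p m else 0)) := by
    intro m
    rcases lt_trichotomy m (k + 1) with h | h | h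
    · have h1 : ¬ k < m := by omega
      have h2 : m ≠ k + 1 := by omega
      have h3 : ¬ k + 1 < m := by omega
      simp [h1, h2, h3]
    · subst h
      have h1 : k < k + 1 := by omega
      have h3 : ¬ k + 1 < k + 1 := by omega
      simp [h1, h3, hmerge]
    · have h1 : k < m := by omega
      have h2 : m ≠ k + 1 := by omega
      simp [h1, h2, h, hmerge, add_mul]
  have key : (∑' m, if k < m then P' k m * p m else 0)
      = (P k (k + 1) + P (k + 1) (k + 1)) * p (k + 1)
      + ((∑' m, if k + 1 < m then P k m * p m else 0)
        + (∑' m, if k + 1 < m then P (k + 1) m * p m else 0)) := by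
    rw [tsum_congr hfe, Summable.tsum_add he (hg1.add hg2), Summable.tsum_add hg1 hg2]
    congr 1
    rw [tsum_eq_single (k + 1)]
    · simp
    · intro b hb'
      simp [hb']
  unfold desired
  rw [key]
  have hsplit1 : ∑ m ∈ Finset.range (k + 1), P' m m * p m
      = (∑ m ∈ Finset.range k, P m m * p m) + (P k k + P (k + 1) k) * p k := by
    rw [Finset.sum_range_succ, hmerge]
    congr 1
    apply Finset.sum_congr rfl
    intro m hm
    rw [hlt m m (Finset.mem_range.mp hm)]
  have hsplit2 : ∑ m ∈ Finset.range (k + 1 + 1), P m m * p m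
      = (∑ m ∈ Finset.range k, P m m * p m) + P k k * p k
        + P (k + 1) (k + 1) * p (k + 1) := by
    rw [Finset.sum_range_succ, Finset.sum_range_succ]
  rw [hsplit1, hsplit2]
  have t1 : 0 ≤ ∑' m, if k + 1 < m then P k m * p m else 0 := tsum_nonneg (hnn k)
  have t2 : 0 ≤ P (k + 1) k * p k := mul_nonneg (hPb _ _).1 (hp0 k)
  have t3 : 0 ≤ P k (k + 1) * p (k + 1) := mul_nonneg (hPb _ _).1 (hp0 _)
  nlinarith [t1, t2, t3]

/-- reducing an `n`-detector (merging outputs `n-1` and `n`)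
does not decrease the PNR quality:  `Q_n(P, F) ≤ Q_{n-1}(P', F)`. -/
theorem quality_le_quality_of_reduction
    (n : ℕ) (hn : 0 < n) (P P' : ℕ → ℕ → ℝ)
    (hP : IsNDetector n P)
    (hP'lt : ∀ k m, k < n - 1 → P' k m = P k m)
    (hP'merge : ∀ m, P' (n - 1) m = P (n - 1) m + P n m)
    (hP'zero : ∀ k m, n ≤ k → P' k m = 0)
    (F : Set (ℕ → ℝ)) (hF : F.Nonempty) (hFdist : ∀ p ∈ F, PhotonDist p) :
    quality n P F ≤ quality (n - 1) P' F := by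
  obtain ⟨k, rfl⟩ : ∃ k, n = k + 1 := ⟨n - 1, by omega⟩
  simp only [Nat.add_sub_cancel] at hP'lt hP'merge ⊢
  have hbdd : BddBelow (desired (k + 1) P '' F) := by
    refine ⟨0, ?_⟩
    rintro x ⟨p, hpF, rfl⟩
    exact desired_nonneg _ _ _ (fun j m => (hP.1 j m).1) (hFdist p hpF).1
  apply le_csInf (hF.image _)
  rintro b ⟨p, hpF, rfl⟩
  calc quality (k + 1) P F ≤ desired (k + 1) P p :=
        csInf_le hbdd ⟨p, hpF, rfl⟩
    _ ≤ desired k P' p :=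
        desired_pointwise k P P' hP hP'lt hP'merge p (hFdist p hpF)
end

section
/- Let P be an n-detector with n > 0 and let P' be its (n-1)-reduction, defined by P'(k, m) = P(k, m) for k < n-1, P'(n-1, m) = P(n-1, m) + P(n, m), and P'(k, m) = 0 for k ≥ n. Then for every photon-number distribution p, the desired-output probability does not decrease under reduction: D_n(P, p) ≤ D_{n-1}(P', p). -/
/-- for every photon-number distribution `p`, the desired-output
probability does not decrease under the `(n-1)`-reduction of an `n`-detector:
`D_n(P, p) ≤ D_{n-1}(P', p)`. -/
theorem desired_le_desired_of_reduction
    (n : ℕ) (hn : 0 < n) (P P' : ℕ → ℕ → ℝ)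
    (hP : IsNDetector n P)
    (hP'lt : ∀ k m, k < n - 1 → P' k m = P k m)
    (hP'merge : ∀ m, P' (n - 1) m = P (n - 1) m + P n m)
    (hP'zero : ∀ k m, n ≤ k → P' k m = 0)
    (p : ℕ → ℝ) (hp : PhotonDist p) :
    desired n P p ≤ desired (n - 1) P' p := by
  obtain ⟨hp0, hp1⟩ := hp
  obtain ⟨hP01, hPzero, hPsum⟩ := hP
  have hsump : Summable p := by
    by_contra h
    rw [tsum_eq_zero_of_not_summable h] at hp1
    norm_num at hp1
  have hn1 : n - 1 + 1 = n := Nat.succ_pred_eq_of_pos hn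
  -- generic lemma pieces
  set f1 : ℕ → ℝ := fun m => if m ≤ n then P m m * p m else 0 with hf1
  set f2 : ℕ → ℝ := fun m => if n < m then P n m * p m else 0 with hf2
  set g1 : ℕ → ℝ := fun m => if m ≤ n - 1 then P' m m * p m else 0 with hg1
  set g2 : ℕ → ℝ := fun m => if n - 1 < m then P' (n-1) m * p m else 0 with hg2
  have hs1 : Summable f1 := by
    apply summable_of_ne_finset_zero (s := Finset.range (n+1))
    intro m hm
    simp only [Finset.mem_range, Nat.lt_succ_iff, not_le] at hm
    simp [hf1, not_le.mpr hm]
  have hsg1 : Summable g1 := by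
    apply summable_of_ne_finset_zero (s := Finset.range n)
    intro m hm
    simp only [Finset.mem_range, not_lt] at hm
    have : ¬ m ≤ n - 1 := by omega
    simp [hg1, this]
  have hs2 : Summable f2 := by
    apply Summable.of_nonneg_of_le (f := p) _ _ hsump
    · intro m
      simp only [hf2]
      split
      · exact mul_nonneg (hP01 n m).1 (hp0 m)
      · exact le_refl 0
    · intro m
      simp only [hf2]
      split
      · calc P n m * p m ≤ 1 * p m := mul_le_mul_of_nonneg_right (hP01 n m).2 (hp0 m)
          _ = p m := one_mul _
      · exact hp0 m
  have hsg2 : Summable g2 := by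
    apply Summable.of_nonneg_of_le (f := fun m => 2 * p m) _ _ (hsump.mul_left 2)
    · intro m
      simp only [hg2, hP'merge]
      split
      · exact mul_nonneg (add_nonneg (hP01 _ m).1 (hP01 n m).1) (hp0 m)
      · exact le_refl 0
    · intro m
      simp only [hg2, hP'merge]
      split
      · calc (P (n-1) m + P n m) * p m ≤ (1 + 1) * p m := by
              apply mul_le_mul_of_nonneg_right _ (hp0 m)
              exact add_le_add (hP01 _ m).2 (hP01 n m).2
          _ = 2 * p m := by ring
      · linarith [hp0 m]
  have hd : desired n P p = ∑' m, (f1 m + f2 m) := by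
    rw [Summable.tsum_add hs1 hs2, desired]
    congr 1
    rw [tsum_eq_sum (s := Finset.range (n+1))]
    · apply Finset.sum_congr rfl
      intro m hm
      simp only [Finset.mem_range, Nat.lt_succ_iff] at hm
      simp [hf1, hm]
    · intro m hm
      simp only [Finset.mem_range, Nat.lt_succ_iff, not_le] at hm
      simp [hf1, not_le.mpr hm]
  have hd' : desired (n-1) P' p = ∑' m, (g1 m + g2 m) := by
    rw [Summable.tsum_add hsg1 hsg2, desired]
    congr 1
    rw [tsum_eq_sum (s := Finset.range (n-1+1))]
    · apply Finset.sum_congr rfl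
      intro m hm
      simp only [Finset.mem_range, Nat.lt_succ_iff] at hm
      simp [hg1, hm]
    · intro m hm
      simp only [Finset.mem_range, Nat.lt_succ_iff, not_le] at hm
      simp [hg1, not_le.mpr hm]
  rw [hd, hd']
  apply Summable.tsum_le_tsum _ (hs1.add hs2) (hsg1.add hsg2)
  intro m
  simp only [hf1, hf2, hg1, hg2]
  rcases lt_trichotomy m n with hm | hm | hm
  · -- m < n : f2 = 0, g2 = 0
    have h1 : m ≤ n := le_of_lt hm
    have h2 : ¬ n < m := by omega
    have h3 : m ≤ n - 1 := by omega
    have h4 : ¬ n - 1 < m := by omega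
    simp only [if_pos h1, if_neg h2, if_pos h3, if_neg h4, add_zero]
    rcases lt_or_eq_of_le h3 with h5 | h5
    · rw [hP'lt m m h5]
    · rw [h5, hP'merge]
      nlinarith [(hP01 n (n-1)).1, hp0 (n-1)]
  · -- m = n
    subst hm
    have h1 : m ≤ m := le_refl m
    have h2 : ¬ m < m := lt_irrefl m
    have h3 : ¬ m ≤ m - 1 := by omega
    have h4 : m - 1 < m := by omega
    simp only [if_pos h1, if_neg h2, if_neg h3, if_pos h4, add_zero, zero_add,
      hP'merge]
    apply mul_le_mul_of_nonneg_right _ (hp0 m)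
    exact le_add_of_nonneg_left (hP01 _ m).1
  · -- n < m
    have h1 : ¬ m ≤ n := by omega
    have h3 : ¬ m ≤ n - 1 := by omega
    have h4 : n - 1 < m := by omega
    simp only [if_neg h1, if_pos hm, if_neg h3, if_pos h4, zero_add, hP'merge]
    apply mul_le_mul_of_nonneg_right _ (hp0 m)
    exact le_add_of_nonneg_left (hP01 _ m).1
end

section
/- Let n, M be natural numbers with 1 ≤ n ≤ M, let 0 < η ≤ 1 and 0 < Q ≤ 1, and suppose Q ≤ (M! / (M − n)!) · η^n / M^n and n·ln(η) − ln(Q) > 0. Then the number of detector elements satisfies M ≥ n(n − 1) / (2·(n·ln(η) − ln(Q))). -/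
/-!
The success probability factors as `η ^ n * ∏_{i < n} (1 - i / M)`. Bounding each factor by
`1 - x ≤ exp (-x)` gives `M.descFactorial n / M ^ n ≤ exp (-n (n - 1) / (2 M))`, so taking logarithms
in `Q ≤ P(n, n)` yields `n (n - 1) / (2 M) ≤ n log η - log Q`, which rearranges to the claim.
-/

open Finset Real

theorem sum_range_cast_id {K : Type*} [Field K] [CharZero K] (n : ℕ) :
    ∑ i ∈ range n, (i : K) = n * (n - 1) / 2 := by
  induction n with
  | zero => simp
  | succ n ih => rw [sum_range_succ, ih]; push_cast; ring

theorem Nat.cast_descFactorial_div_pow_eq_prod {K : Type*} [Field K] [CharZero K] (M n : ℕ)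
    (hnM : n ≤ M) :
    (M.descFactorial n : K) / (M : K) ^ n = ∏ i ∈ range n, (1 - (i : K) / M) := by
  calc (M.descFactorial n : K) / (M : K) ^ n
      = (∏ i ∈ range n, ((M - i : ℕ) : K)) / ∏ _i ∈ range n, (M : K) := by
        rw [descFactorial_eq_prod_range, cast_prod, prod_const, card_range]
    _ = ∏ i ∈ range n, (1 - (i : K) / M) := by
        rw [← prod_div_distrib]
        refine prod_congr rfl fun i hi => ?_
        have hi : i < M := (mem_range.mp hi).trans_le hnM
        have hM : (M : K) ≠ 0 := cast_ne_zero.mpr (by omega)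
        rw [cast_sub hi.le, sub_div, div_self hM]

theorem Nat.cast_descFactorial_div_pow_le_exp (M n : ℕ) (hnM : n ≤ M) :
    (M.descFactorial n : ℝ) / (M : ℝ) ^ n ≤ exp (-(n * (n - 1) / 2 / M)) := by
  rw [Nat.cast_descFactorial_div_pow_eq_prod M n hnM, ← sum_range_cast_id, sum_div,
    ← sum_neg_distrib, exp_sum]
  refine prod_le_prod (fun i hi => ?_) (fun i _ => one_sub_le_exp_neg _)
  have hi : (i : ℝ) ≤ M := by exact_mod_cast ((mem_range.mp hi).trans_le hnM).le
  exact sub_nonneg.mpr (div_le_one_of_le₀ hi M.cast_nonneg)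

theorem detector_number_quadratic_scaling_general
    (n M : ℕ) (hn : 1 ≤ n) (hnM : n ≤ M) (η Q : ℝ)
    (hη0 : 0 < η) (hQ0 : 0 < Q)
    (hQle : Q ≤ (M.descFactorial n : ℝ) * η ^ n / (M : ℝ) ^ n)
    (hpos : 0 < (n : ℝ) * Real.log η - Real.log Q) :
    (M : ℝ) ≥ (n : ℝ) * ((n : ℝ) - 1) /
      (2 * ((n : ℝ) * Real.log η - Real.log Q)) := by
  have hM : (0 : ℝ) < M := by exact_mod_cast hn.trans hnM
  have hQ : Q ≤ η ^ n * exp (-(n * (n - 1) / 2 / M)) := by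
    rw [mul_div_right_comm, mul_comm] at hQle
    exact hQle.trans (by gcongr; exact Nat.cast_descFactorial_div_pow_le_exp M n hnM)
  have hlog : log Q ≤ n * log η - n * (n - 1) / 2 / M := by
    have := log_le_log hQ0 hQ
    rwa [log_mul (by positivity) (exp_pos _).ne', log_pow, log_exp, ← sub_eq_add_neg] at this
  rw [ge_iff_le, div_le_iff₀ (by positivity)]
  rw [le_sub_comm, div_le_iff₀ hM] at hlog
  linarith

/-- quadratic scaling of the number of detector elements.  If
`1 ≤ n ≤ M`, `0 < η ≤ 1`, `0 < Q ≤ 1`, `Q ≤ (M!/(M-n)!) · η^n / M^n`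
(the probability that a spatial array of `M` ideal click detectors outputs
`n` on `n` input photons), and `n·ln(η) − ln(Q) > 0`, then
`M ≥ n(n−1) / (2(n·ln(η) − ln(Q)))`. -/
theorem detector_number_quadratic_scaling
    (n M : ℕ) (hn : 1 ≤ n) (hnM : n ≤ M) (η Q : ℝ)
    (hη0 : 0 < η) (hη1 : η ≤ 1) (hQ0 : 0 < Q) (hQ1 : Q ≤ 1)
    (hQle : Q ≤ (M.descFactorial n : ℝ) * η ^ n / (M : ℝ) ^ n)
    (hpos : 0 < (n : ℝ) * Real.log η - Real.log Q) :
    (M : ℝ) ≥ (n : ℝ) * ((n : ℝ) - 1) /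
      (2 * ((n : ℝ) * Real.log η - Real.log Q)) :=
  detector_number_quadratic_scaling_general n M hn hnM η Q hη0 hQ0 hQle hpos
end

section
/- Let 0 ≤ η ≤ 1 and let P be the 1-detector describing a single-photon click detector with quantum efficiency η and zero dark counts: P(1, m) = 1 − (1 − η)^m and P(0, m) = (1 − η)^m for all m ∈ ℕ. Then the PNR quality over all photon-number distributions is Q_1(P) = η; moreover the infimum is realized by the single-photon point mass p(m) = δ_{m,1}. -/
/-- The PNR quality of the `n`-detector `P` over the set of ALL photon-number
distributions. -/
noncomputable def qualityAll (n : ℕ) (P : ℕ → ℕ → ℝ) : ℝ :=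
  sInf (desired n P '' {p | PhotonDist p})

/-- a single-photon click detector with quantum efficiency `η`
and zero dark counts, i.e. the 1-detector with `P(1, m) = 1 - (1-η)^m`,
`P(0, m) = (1-η)^m` and `P(k, m) = 0` for `k > 1`, has PNR quality
`Q_1(P) = η` over all photon-number distributions; moreover the infimum is
realized by the single-photon point mass `δ_{m,1}`. -/
theorem single_photon_detector_quality
    (η : ℝ) (hη0 : 0 ≤ η) (hη1 : η ≤ 1) (P : ℕ → ℕ → ℝ)
    (hP1 : ∀ m, P 1 m = 1 - (1 - η) ^ m)
    (hP0 : ∀ m, P 0 m = (1 - η) ^ m)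
    (hPk : ∀ k m, 1 < k → P k m = 0) :
    qualityAll 1 P = η ∧
    desired 1 P (fun m => if m = 1 then (1 : ℝ) else 0) = η := by
  have hδ : desired 1 P (fun m => if m = 1 then (1 : ℝ) else 0) = η := by
    unfold desired
    have h1 : (∑' m : ℕ, if 1 < m then P 1 m * (if m = 1 then (1:ℝ) else 0) else 0) = 0 := by
      have heq : (fun m : ℕ => if 1 < m then P 1 m * (if m = 1 then (1:ℝ) else 0) else 0)
          = fun _ => (0:ℝ) := by
        funext m
        rcases lt_or_ge 1 m with h | h
        · have : m ≠ 1 := Nat.ne_of_gt h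
          simp [h, this]
        · simp [not_lt.mpr h]
      rw [heq, tsum_zero]
    rw [h1]
    simp [Finset.sum_range_succ, hP1]
  have hδdist : PhotonDist (fun m => if m = 1 then (1:ℝ) else 0) := by
    constructor
    · intro m; dsimp only; split <;> norm_num
    · rw [tsum_eq_single 1]
      · simp
      · intro b hb; simp [hb]
  have h1η : 0 ≤ 1 - η := by linarith
  have hlb : ∀ p, PhotonDist p → η ≤ desired 1 P p := by
    rintro p ⟨hpos, hsum⟩
    have hsummable : Summable p := by
      by_contra h
      rw [tsum_eq_zero_of_not_summable h] at hsum; norm_num at hsum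
    have hpow : ∀ m : ℕ, 0 ≤ (1-η)^m := fun m => pow_nonneg h1η m
    set t : ℕ → ℝ := fun m => if 1 < m then P 1 m * p m else 0 with ht
    set f : ℕ → ℝ := fun m => if 1 < m then p m else 0 with hf
    have htnn : ∀ m, 0 ≤ t m := by
      intro m; simp only [ht]; split
      · exact mul_nonneg (by rw [hP1]; nlinarith [hpow m, pow_le_one₀ h1η (by linarith : 1 - η ≤ 1) (n := m)]) (hpos m)
      · exact le_refl 0
    have htle : ∀ m, t m ≤ p m := by
      intro m; simp only [ht]; split
      · rw [hP1]; nlinarith [hpow m, hpos m]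
      · exact hpos m
    have htsumm : Summable t := Summable.of_nonneg_of_le htnn htle hsummable
    have hfsumm : Summable f := by
      refine Summable.of_nonneg_of_le ?_ ?_ hsummable
      · intro m; simp only [hf]; split
        · exact hpos m
        · exact le_refl 0
      · intro m; simp only [hf]; split
        · exact le_refl _
        · exact hpos m
    have hterm : ∀ m, η * f m ≤ t m := by
      intro m; simp only [hf, ht]; split
      · rename_i h
        rw [hP1]
        have hle : (1-η)^m ≤ (1-η)^1 :=
          pow_le_pow_of_le_one h1η (by linarith) (by omega)
        simp at hle
        nlinarith [hpos m]
      · simp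
    have htail : η * ∑' m, f m ≤ ∑' m, t m := by
      rw [← tsum_mul_left]
      exact Summable.tsum_le_tsum hterm (hfsumm.mul_left η) htsumm
    have hsplit : ∑ m ∈ Finset.range 2, p m + ∑' m, p (m+2) = 1 := by
      rw [Summable.sum_add_tsum_nat_add 2 hsummable, hsum]
    have hfval : ∑' m, f m = 1 - p 0 - p 1 := by
      have h2 : ∑ m ∈ Finset.range 2, f m + ∑' m, f (m+2) = ∑' m, f m :=
        Summable.sum_add_tsum_nat_add 2 hfsumm
      have hf2 : (fun m : ℕ => f (m+2)) = fun m => p (m+2) := by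
        funext m; simp [hf]
      rw [hf2] at h2
      have hf0 : ∑ m ∈ Finset.range 2, f m = 0 := by
        simp [Finset.sum_range_succ, hf]
      rw [hf0, zero_add] at h2
      rw [← h2]
      have := hsplit
      simp [Finset.sum_range_succ] at this
      linarith
    have hdes : desired 1 P p = p 0 + η * p 1 + ∑' m, t m := by
      unfold desired
      simp [Finset.sum_range_succ, hP0, hP1, ht]
      try ring
    rw [hdes]
    have := htail
    rw [hfval] at this
    nlinarith [hpos 0, hpos 1]
  have hmem : η ∈ desired 1 P '' {p | PhotonDist p} := ⟨_, hδdist, hδ⟩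
  have hbdd : BddBelow (desired 1 P '' {p | PhotonDist p}) := by
    refine ⟨η, ?_⟩
    rintro x ⟨p, hp, rfl⟩
    exact hlb p hp
  refine ⟨le_antisymm (csInf_le hbdd hmem) (le_csInf ⟨η, hmem⟩ ?_), hδ⟩
  rintro x ⟨p, hp, rfl⟩
  exact hlb p hp
end
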